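/- (Lemma 1: simplification of the dynamic program.) Define v_{T+1} = 0 and, recursively for n = T, T−1, …, 1, v_n = min_{1 ≤ a ≤ T−n+1} { ℓ_{n,a} + v_{n+a} }. For each n let ā_n = max { a : 1 ≤ a ≤ T−n+1 and L_{n,1}(y_{n,a}) ≤ ℓ_{n,1} } (this set contains a = 1, so ā_n is well defined). Then the recursion is unchanged when the range of minimization is restricted: v_n = min_{1 ≤ a ≤ ā_n} { ℓ_{n,a} + v_{n+a} } for every period n. -/

import Mathlib

open MeasureTheory ProbabilityTheory

/-- Accumulated demand `ξ_{n,k} = ξ_n + ⋯ + ξ_{n+k-1}`. -/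
noncomputable def acc {Ω : Type*} (ξ : ℕ → Ω → ℝ) (n k : ℕ) (ω : Ω) : ℝ :=
  ∑ i ∈ Finset.range k, ξ (n + i) ω

/-- Cumulative distribution function `φ_{n,k}(y) = P(ξ_{n,k} ≤ y)` of accumulated demand. -/
noncomputable def cdf {Ω : Type*} [MeasurableSpace Ω] (μ : Measure Ω) (ξ : ℕ → Ω → ℝ)
    (n k : ℕ) (y : ℝ) : ℝ :=
  (μ {ω | acc ξ n k ω ≤ y}).toReal

/-- Multi-period cost function
`L_{n,a}(y) = Σ_{k=1}^{a} (h·E[(y − ξ_{n,k})⁺] + p·E[(ξ_{n,k} − y)⁺])`. -/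
noncomputable def Lmp {Ω : Type*} [MeasurableSpace Ω] (μ : Measure Ω) (h p : ℝ)
    (ξ : ℕ → Ω → ℝ) (n a : ℕ) (y : ℝ) : ℝ :=
  ∑ k ∈ Finset.Icc 1 a,
    (h * ∫ ω, max (y - acc ξ n k ω) 0 ∂μ + p * ∫ ω, max (acc ξ n k ω - y) 0 ∂μ)

/-!
If `a > ā_n`, then `L_{n,1}(y_{n,a}) > ℓ_{n,1}`. Splitting off the first period of the cycle and
conditioning on the independent demand `ξ_n` gives
`L_{n,a}(y_{n,a}) ≥ L_{n,1}(y_{n,a}) + L_{n+1,a-1}(y_{n+1,a-1})`, while the recursion at `n + 1`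
gives `v_{n+1} ≤ ℓ_{n+1,a-1} + v_{n+a}`. Adding up, `ℓ_{n,a} + v_{n+a} > ℓ_{n,1} + v_{n+1}`, so
such an `a` never beats `a = 1` and can be dropped from the minimum.
-/

open Finset

def newsvendorCost (h p z x : ℝ) : ℝ :=
  h * max (z - x) 0 + p * max (x - z) 0

lemma newsvendorCost_add (h p z x t : ℝ) :
    newsvendorCost h p z (x + t) = newsvendorCost h p (z - x) t := by
  simp only [newsvendorCost]
  ring_nf

lemma measurable_newsvendorCost (h p z : ℝ) : Measurable (newsvendorCost h p z) := by
  unfold newsvendorCost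
  fun_prop

section Integrability

variable {Ω : Type*} [MeasurableSpace Ω] {μ : Measure Ω} [IsFiniteMeasure μ] {D : Ω → ℝ}

lemma MeasureTheory.Integrable.newsvendorCost (hD : Integrable D μ) (h p z : ℝ) :
    Integrable (fun ω => newsvendorCost h p z (D ω)) μ :=
  (((integrable_const z).sub hD).pos_part.const_mul h).add
    ((hD.sub (integrable_const z)).pos_part.const_mul p)

lemma integral_newsvendorCost (hD : Integrable D μ) (h p z : ℝ) :
    ∫ ω, newsvendorCost h p z (D ω) ∂μ
      = h * ∫ ω, max (z - D ω) 0 ∂μ + p * ∫ ω, max (D ω - z) 0 ∂μ := by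
  have hover : Integrable (fun ω => max (z - D ω) 0) μ := ((integrable_const z).sub hD).pos_part
  have hunder : Integrable (fun ω => max (D ω - z) 0) μ := (hD.sub (integrable_const z)).pos_part
  rw [← integral_const_mul, ← integral_const_mul, ← integral_add (hover.const_mul h)
    (hunder.const_mul p)]
  rfl

end Integrability

section Convolution

variable {M ι : Type*} [AddMonoid M] {mM : MeasurableSpace M} [MeasurableAdd₂ M]

lemma le_sum_integral_conv {ν : Measure M} [IsProbabilityMeasure ν] {ρ : ι → Measure M}
    [∀ j, SFinite (ρ j)] {s : Finset ι} {g : M → ℝ} (hg : ∀ j ∈ s, Integrable g (ν ∗ ρ j))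
    {m : ℝ} (hm : ∀ x, m ≤ ∑ j ∈ s, ∫ y, g (x + y) ∂ρ j) :
    m ≤ ∑ j ∈ s, ∫ z, g z ∂(ν ∗ ρ j) := by
  have hG : ∀ j ∈ s, Integrable (fun x => ∫ y, g (x + y) ∂ρ j) ν := fun j hj =>
    ((hg j hj).comp_measurable measurable_add).integral_prod_left
  calc m = ∫ _, m ∂ν := by simp
    _ ≤ ∫ x, ∑ j ∈ s, ∫ y, g (x + y) ∂ρ j ∂ν :=
        integral_mono (integrable_const m) (integrable_finsetSum s hG) hm
    _ = ∑ j ∈ s, ∫ x, ∫ y, g (x + y) ∂ρ j ∂ν := integral_finsetSum s hG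
    _ = ∑ j ∈ s, ∫ z, g z ∂(ν ∗ ρ j) :=
        sum_congr rfl fun j hj => (integral_conv (hg j hj)).symm

lemma le_sum_integral_comp_add_of_indepFun {Ω : Type*} [MeasurableSpace Ω] {μ : Measure Ω}
    [IsProbabilityMeasure μ] {X : Ω → M} {Y : ι → Ω → M} {s : Finset ι}
    (hX : AEMeasurable X μ) (hY : ∀ j ∈ s, AEMeasurable (Y j) μ)
    (hXY : ∀ j ∈ s, IndepFun X (Y j) μ) {g : M → ℝ} (hg : StronglyMeasurable g)
    (hint : ∀ j ∈ s, Integrable (fun ω => g (X ω + Y j ω)) μ)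
    {m : ℝ} (hm : ∀ x, m ≤ ∑ j ∈ s, ∫ ω, g (x + Y j ω) ∂μ) :
    m ≤ ∑ j ∈ s, ∫ ω, g (X ω + Y j ω) ∂μ := by
  have : IsProbabilityMeasure (μ.map X) := Measure.isProbabilityMeasure_map hX
  have hlaw : ∀ j ∈ s, μ.map (X + Y j) = μ.map X ∗ μ.map (Y j) := fun j hj =>
    (hXY j hj).map_add_eq_map_conv_map₀ hX (hY j hj)
  have hXYj : ∀ j ∈ s, AEMeasurable (X + Y j) μ := fun j hj => hX.add (hY j hj)
  calc m ≤ ∑ j ∈ s, ∫ z, g z ∂(μ.map X ∗ μ.map (Y j)) := by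
        refine le_sum_integral_conv (fun j hj => ?_) fun x => (hm x).trans_eq ?_
        · rw [← hlaw j hj]
          exact (integrable_map_measure hg.aestronglyMeasurable (hXYj j hj)).mpr (hint j hj)
        · refine sum_congr rfl fun j hj =>
            (integral_map (hY j hj) (f := fun y => g (x + y)) ?_).symm
          exact (hg.comp_measurable (measurable_const_add x)).aestronglyMeasurable
    _ = ∑ j ∈ s, ∫ ω, g (X ω + Y j ω) ∂μ := sum_congr rfl fun j hj => by
        rw [← hlaw j hj, integral_map (hXYj j hj) hg.aestronglyMeasurable]
        rfl

end Convolution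

section Demand

variable {Ω : Type*}

lemma acc_eq_sum_Ico (ξ : ℕ → Ω → ℝ) (n k : ℕ) : acc ξ n k = ∑ i ∈ Ico n (n + k), ξ i := by
  ext ω
  simp [acc, sum_Ico_eq_sum_range]

lemma acc_succ (ξ : ℕ → Ω → ℝ) (n k : ℕ) (ω : Ω) :
    acc ξ n (k + 1) ω = ξ n ω + acc ξ (n + 1) k ω := by
  simp only [acc, sum_range_succ', add_zero, add_comm, add_left_comm]

variable [MeasurableSpace Ω] {μ : Measure Ω} {ξ : ℕ → Ω → ℝ}

lemma integrable_acc (hint : ∀ i, Integrable (ξ i) μ) (n k : ℕ) : Integrable (acc ξ n k) μ := by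
  rw [acc_eq_sum_Ico]
  exact integrable_finsetSum' _ fun i _ => hint i

lemma indepFun_acc_succ (hint : ∀ i, Integrable (ξ i) μ) (hind : iIndepFun ξ μ) (n k : ℕ) :
    IndepFun (ξ n) (acc ξ (n + 1) k) μ := by
  rw [acc_eq_sum_Ico]
  exact (hind.indepFun_finsetSum_of_notMem₀ (fun i => (hint i).aemeasurable)
    (by simp)).symm

lemma Lmp_eq_sum_range [IsFiniteMeasure μ] (hint : ∀ i, Integrable (ξ i) μ) (h p : ℝ)
    (n a : ℕ) (z : ℝ) :
    Lmp μ h p ξ n a z = ∑ k ∈ range a, ∫ ω, newsvendorCost h p z (acc ξ n (k + 1) ω) ∂μ := by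
  rw [Lmp, ← Ico_add_one_right_eq_Icc, sum_Ico_eq_sum_range, Nat.add_sub_cancel]
  exact sum_congr rfl fun k _ => by
    rw [add_comm k 1, integral_newsvendorCost (integrable_acc hint n _)]

/-- Given the independent demand `ξ_n = x`, the last `a` periods of the cycle cost as much as an
`a`-cycle from `n + 1` ordered up to `z - x`. -/
lemma Lmp_one_add_le_Lmp_succ [IsProbabilityMeasure μ] (hint : ∀ i, Integrable (ξ i) μ)
    (hind : iIndepFun ξ μ) (h p : ℝ) (n a : ℕ) (z : ℝ) {m : ℝ}
    (hm : ∀ w, m ≤ Lmp μ h p ξ (n + 1) a w) :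
    Lmp μ h p ξ n 1 z + m ≤ Lmp μ h p ξ n (a + 1) z := by
  have htail : m ≤ ∑ k ∈ range a,
      ∫ ω, newsvendorCost h p z (ξ n ω + acc ξ (n + 1) (k + 1) ω) ∂μ := by
    refine le_sum_integral_comp_add_of_indepFun (hint n).aemeasurable
      (fun k _ => (integrable_acc hint _ _).aemeasurable)
      (fun k _ => indepFun_acc_succ hint hind n _)
      (measurable_newsvendorCost h p z).stronglyMeasurable
      (fun k _ => ((hint n).add (integrable_acc hint _ _)).newsvendorCost h p z)
      fun x => (hm (z - x)).trans_eq ?_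
    simp only [Lmp_eq_sum_range hint, newsvendorCost_add]
  rw [Lmp_eq_sum_range hint h p n (a + 1), sum_range_succ', Lmp_eq_sum_range hint h p n 1,
    sum_range_one]
  simp only [acc_succ ξ n (_ + 1)] at htail ⊢
  linarith

end Demand

section FiniteMinimum

lemma setOf_exists_Icc_eq_image {α : Type*} (f : ℕ → α) (M : ℕ) :
    {x | ∃ a, 1 ≤ a ∧ a ≤ M ∧ x = f a} = f '' Set.Icc 1 M := by
  ext x
  simp only [Set.mem_ofPred_eq, Set.mem_image, Set.mem_Icc, and_assoc, eq_comm]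

variable {α : Type*} [ConditionallyCompleteLinearOrder α] {f : ℕ → α}

lemma sInf_setOf_Icc_le {M a : ℕ} (ha : 1 ≤ a) (haM : a ≤ M) :
    sInf {x | ∃ a, 1 ≤ a ∧ a ≤ M ∧ x = f a} ≤ f a := by
  rw [setOf_exists_Icc_eq_image]
  exact csInf_le ((Set.finite_Icc 1 M).image f).bddBelow ⟨a, ⟨ha, haM⟩, rfl⟩

lemma sInf_setOf_Icc_eq_of_le {b M : ℕ} (hb : 1 ≤ b) (hbM : b ≤ M)
    (hf : ∀ a, b < a → a ≤ M → f 1 ≤ f a) :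
    sInf {x | ∃ a, 1 ≤ a ∧ a ≤ M ∧ x = f a} = sInf {x | ∃ a, 1 ≤ a ∧ a ≤ b ∧ x = f a} := by
  refine le_antisymm ?_ ?_
  · rw [setOf_exists_Icc_eq_image, setOf_exists_Icc_eq_image]
    exact csInf_le_csInf ((Set.finite_Icc 1 M).image f).bddBelow
      ⟨f 1, 1, ⟨le_rfl, hb⟩, rfl⟩ (Set.image_mono (Set.Icc_subset_Icc_right hbM))
  · refine le_csInf ⟨f 1, 1, le_rfl, hb.trans hbM, rfl⟩ ?_
    rintro _ ⟨a, ha, haM, rfl⟩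
    rcases le_or_gt a b with hab | hab
    · exact sInf_setOf_Icc_le ha hab
    · exact (sInf_setOf_Icc_le le_rfl hb).trans (hf a hab haM)

end FiniteMinimum

theorem stmt8_general {Ω : Type*} [MeasurableSpace Ω] (μ : Measure Ω) [IsProbabilityMeasure μ]
    (T : ℕ) (ξ : ℕ → Ω → ℝ)
    (hint : ∀ i, Integrable (ξ i) μ)
    (hind : iIndepFun ξ μ)
    (h p K : ℝ)
    (y : ℕ → ℕ → ℝ)
    (hymin : ∀ n a, 1 ≤ n → 1 ≤ a → n + a - 1 ≤ T →
      ∀ z, Lmp μ h p ξ n a (y n a) ≤ Lmp μ h p ξ n a z)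
    (v : ℕ → ℝ)
    (hv : ∀ n, 1 ≤ n → n ≤ T →
      v n = sInf {x : ℝ | ∃ a, 1 ≤ a ∧ a ≤ T - n + 1 ∧
        x = (K + Lmp μ h p ξ n a (y n a)) + v (n + a)})
    (abar : ℕ → ℕ)
    (habar : ∀ n, 1 ≤ n → n ≤ T →
      IsGreatest {a : ℕ | 1 ≤ a ∧ a ≤ T - n + 1 ∧
        Lmp μ h p ξ n 1 (y n a) ≤ K + Lmp μ h p ξ n 1 (y n 1)} (abar n)) :
    ∀ n, 1 ≤ n → n ≤ T →
      v n = sInf {x : ℝ | ∃ a, 1 ≤ a ∧ a ≤ abar n ∧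
        x = (K + Lmp μ h p ξ n a (y n a)) + v (n + a)} := by
  intro n hn hnT
  obtain ⟨⟨habar_pos, habar_le, -⟩, habar_max⟩ := habar n hn hnT
  rw [hv n hn hnT]
  refine sInf_setOf_Icc_eq_of_le habar_pos habar_le fun a hlt haT => ?_
  obtain ⟨b, rfl⟩ : ∃ b, a = b + 1 := ⟨a - 1, by omega⟩
  have hfirst : K + Lmp μ h p ξ n 1 (y n 1) < Lmp μ h p ξ n 1 (y n (b + 1)) := by
    by_contra! hle
    exact hlt.not_ge (habar_max ⟨by omega, haT, hle⟩)
  have hrest := Lmp_one_add_le_Lmp_succ hint hind h p n b (y n (b + 1))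
    (hymin (n + 1) b (by omega) (by omega) (by omega))
  have hnext : v (n + 1) ≤ K + Lmp μ h p ξ (n + 1) b (y (n + 1) b) + v (n + 1 + b) := by
    rw [hv (n + 1) (by omega) (by omega)]
    exact sInf_setOf_Icc_le (f := fun a => K + Lmp μ h p ξ (n + 1) a (y (n + 1) a)
      + v (n + 1 + a)) (by omega) (by omega)
  rw [← add_assoc n b 1, add_right_comm n b 1]
  linarith

/-- Lemma 1: the dynamic-programming recursion
`v_n = min_{1 ≤ a ≤ T−n+1} {ℓ_{n,a} + v_{n+a}}` is unchanged when the minimization is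
restricted to `1 ≤ a ≤ ā_n`, where
`ā_n = max {a : 1 ≤ a ≤ T−n+1 and L_{n,1}(y_{n,a}) ≤ ℓ_{n,1}}`. -/
theorem stmt8 {Ω : Type*} [MeasurableSpace Ω] (μ : Measure Ω) [IsProbabilityMeasure μ]
    (T : ℕ) (hT : 1 ≤ T) (ξ : ℕ → Ω → ℝ)
    (hmeas : ∀ i, Measurable (ξ i)) (hint : ∀ i, Integrable (ξ i) μ)
    (hpos : ∀ i, ∀ᵐ ω ∂μ, 0 ≤ ξ i ω)
    (hind : iIndepFun ξ μ)
    (h p K : ℝ) (hh : 0 < h) (hp : 0 < p) (hK : 0 ≤ K)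
    (y : ℕ → ℕ → ℝ)
    (hyleast : ∀ n a, 1 ≤ n → 1 ≤ a → n + a - 1 ≤ T →
      IsLeast {z : ℝ | (a : ℝ) * p / (h + p) ≤ ∑ k ∈ Finset.Icc 1 a, cdf μ ξ n k z}
        (y n a))
    (hymin : ∀ n a, 1 ≤ n → 1 ≤ a → n + a - 1 ≤ T →
      ∀ z, Lmp μ h p ξ n a (y n a) ≤ Lmp μ h p ξ n a z)
    (v : ℕ → ℝ) (hvT : v (T + 1) = 0)
    (hv : ∀ n, 1 ≤ n → n ≤ T →
      v n = sInf {x : ℝ | ∃ a, 1 ≤ a ∧ a ≤ T - n + 1 ∧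
        x = (K + Lmp μ h p ξ n a (y n a)) + v (n + a)})
    (abar : ℕ → ℕ)
    (habar : ∀ n, 1 ≤ n → n ≤ T →
      IsGreatest {a : ℕ | 1 ≤ a ∧ a ≤ T - n + 1 ∧
        Lmp μ h p ξ n 1 (y n a) ≤ K + Lmp μ h p ξ n 1 (y n 1)} (abar n)) :
    ∀ n, 1 ≤ n → n ≤ T →
      v n = sInf {x : ℝ | ∃ a, 1 ≤ a ∧ a ≤ abar n ∧
        x = (K + Lmp μ h p ξ n a (y n a)) + v (n + a)} :=
  stmt8_general μ T ξ hint hind h p K y hymin v hv abar habar
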